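/- Let T be an abelian regular subgroup of Aff(V) with associated radical algebra product (x·y = xδ(y)). Then the translation group N normalizes T if and only if x·y·z = 0 for all x, y, z ∈ V (the algebra has trivial threefold products). -/

import Mathlib

/-! Write `τ x = (1 + δ x) t_x` for the elements of `T`. Commutativity of `T` gives `δ x y = δ y x`,
so `δ` is additive in its first argument as well. Conjugating `τ a` by the translation by `v` yields
the affine map with linear part `1 + δ a` and translation part `δ a v + a`; by regularity it lies in
`T` exactly when `δ (δ a v + a) = δ a`, that is, when `δ (δ a v) = 0`, and by commutativity this is
`δ t (δ a v) = 0` for all `t`. -/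

namespace AffineEquiv

variable {k V : Type*} [Ring k] [AddCommGroup V] [Module k V]

theorem inv_mul_mul_apply_of_forall_apply_eq_add {n : V ≃ᵃ[k] V} {v : V}
    (hn : ∀ z, n z = z + v) (g : V ≃ᵃ[k] V) (z : V) : (n⁻¹ * g * n) z = g (z + v) - v := by
  rw [coe_mul, coe_mul, inv_def, Function.comp_apply, Function.comp_apply, symm_apply_eq, hn, hn,
    sub_add_cancel]

end AffineEquiv

namespace AbelianRegularSubgroup

variable {k V : Type*} [Ring k] [AddCommGroup V] [Module k V]
  {T : Subgroup (V ≃ᵃ[k] V)} {τ : V → V ≃ᵃ[k] V} {δ : V → Module.End k V}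

theorem delta_comm (hδ : ∀ x z, τ x z = z + δ x z + x) {x y : V} (h : τ x * τ y = τ y * τ x) :
    δ x y = δ y x := by
  have h0 := congrArg (fun g : V ≃ᵃ[k] V => g 0) h
  simp only [AffineEquiv.coe_mul, Function.comp_apply, hδ, map_zero, add_zero, zero_add] at h0
  rw [add_comm y, add_comm x, add_right_comm] at h0
  exact add_right_cancel (add_right_cancel h0)

theorem delta_add (hcomm : ∀ x y, δ x y = δ y x) (x y : V) : δ (x + y) = δ x + δ y := by
  ext z
  simp only [LinearMap.add_apply, hcomm _ z, map_add]

theorem apply_eq_of_mem (hreg : ∀ v : V, ∃! g : V ≃ᵃ[k] V, g ∈ T ∧ g 0 = v)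
    (hτT : ∀ x, τ x ∈ T) (hδ : ∀ x z, τ x z = z + δ x z + x) {g : V ≃ᵃ[k] V} (hg : g ∈ T)
    (z : V) : g z = z + δ (g 0) z + g 0 := by
  have hτ : g = τ (g 0) := (hreg (g 0)).unique ⟨hg, rfl⟩ ⟨hτT _, by simp [hδ]⟩
  exact (congrArg (fun f : V ≃ᵃ[k] V => f z) hτ).trans (hδ _ z)

theorem mem_iff_delta_eq (hreg : ∀ v : V, ∃! g : V ≃ᵃ[k] V, g ∈ T ∧ g 0 = v)
    (hτT : ∀ x, τ x ∈ T) (hδ : ∀ x z, τ x z = z + δ x z + x) {g : V ≃ᵃ[k] V} {a w : V}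
    (hg : ∀ z, g z = z + δ a z + w) : g ∈ T ↔ δ w = δ a := by
  have hg0 : g 0 = w := by simp [hg]
  constructor
  · intro hT
    ext z
    have h := (hg z).symm.trans (apply_eq_of_mem hreg hτT hδ hT z)
    rw [hg0] at h
    exact (add_left_cancel (add_right_cancel h)).symm
  · intro h
    have : g = τ w := by
      ext z
      rw [hg, hδ, h]
    exact this ▸ hτT w

theorem inv_mul_mul_mem_iff (hreg : ∀ v : V, ∃! g : V ≃ᵃ[k] V, g ∈ T ∧ g 0 = v)
    (hτT : ∀ x, τ x ∈ T) (hδ : ∀ x z, τ x z = z + δ x z + x) (hcomm : ∀ x y, δ x y = δ y x)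
    {n g : V ≃ᵃ[k] V} {a v : V} (hg : ∀ z, g z = z + δ a z + a) (hn : ∀ z, n z = z + v) :
    n⁻¹ * g * n ∈ T ↔ ∀ t, δ t (δ a v) = 0 := by
  have happ : ∀ z, (n⁻¹ * g * n) z = z + δ a z + (δ a v + a) := fun z => by
    rw [AffineEquiv.inv_mul_mul_apply_of_forall_apply_eq_add hn, hg, map_add]
    abel
  rw [mem_iff_delta_eq hreg hτT hδ happ, delta_add hcomm, add_eq_right, LinearMap.ext_iff]
  simp only [LinearMap.zero_apply, hcomm _ (δ a v)]

end AbelianRegularSubgroup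

theorem stmt_general {F V : Type*} [Field F] [AddCommGroup V] [Module F V]
    (T : Subgroup (V ≃ᵃ[F] V))
    (hcomm : ∀ g ∈ T, ∀ h ∈ T, g * h = h * g)
    (hreg : ∀ v : V, ∃! g : V ≃ᵃ[F] V, g ∈ T ∧ g 0 = v)
    (τ : V → (V ≃ᵃ[F] V)) (hτT : ∀ x, τ x ∈ T)
    (δ : V → Module.End F V)
    (hδ : ∀ x z, τ x z = z + δ x z + x)
    (N : Subgroup (V ≃ᵃ[F] V))
    (hN : ∀ g : V ≃ᵃ[F] V, g ∈ N ↔ ∃ x : V, ∀ z : V, g z = z + x) :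
    (∀ n ∈ N, ∀ g ∈ T, n⁻¹ * g * n ∈ T) ↔ (∀ x y z : V, δ z (δ y x) = 0) := by
  have hδcomm : ∀ x y, δ x y = δ y x := fun x y =>
    AbelianRegularSubgroup.delta_comm hδ (hcomm _ (hτT x) _ (hτT y))
  constructor
  · intro hnorm x y z
    have hn : ∀ z, AffineEquiv.constVAdd F V x z = z + x := fun z => add_comm x z
    have hconj := hnorm _ ((hN _).2 ⟨x, hn⟩) _ (hτT y)
    exact (AbelianRegularSubgroup.inv_mul_mul_mem_iff hreg hτT hδ hδcomm (hδ y) hn).1 hconj z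
  · intro h n hn g hg
    obtain ⟨v, hv⟩ := (hN n).1 hn
    have hg' := AbelianRegularSubgroup.apply_eq_of_mem hreg hτT hδ hg
    exact (AbelianRegularSubgroup.inv_mul_mul_mem_iff hreg hτT hδ hδcomm hg' hv).2 (h v (g 0))

theorem stmt {F V : Type*} [Field F] [AddCommGroup V] [Module F V]
    (T : Subgroup (V ≃ᵃ[F] V))
    (hcomm : ∀ g ∈ T, ∀ h ∈ T, g * h = h * g)
    (hreg : ∀ v : V, ∃! g : V ≃ᵃ[F] V, g ∈ T ∧ g 0 = v)
    (τ : V → (V ≃ᵃ[F] V)) (hτT : ∀ x, τ x ∈ T) (hτ0 : ∀ x, τ x 0 = x)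
    (δ : V → Module.End F V)
    (hδ : ∀ x z, τ x z = z + δ x z + x)
    (N : Subgroup (V ≃ᵃ[F] V))
    (hN : ∀ g : V ≃ᵃ[F] V, g ∈ N ↔ ∃ x : V, ∀ z : V, g z = z + x) :
    (∀ n ∈ N, ∀ g ∈ T, n⁻¹ * g * n ∈ T) ↔ (∀ x y z : V, δ z (δ y x) = 0) :=
  stmt_general T hcomm hreg τ hτT δ hδ N hN
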